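/- Let f : [0,∞) → ℝ be continuously differentiable and suppose f' is eventually monotone and eventually nonvanishing (there is x₀ ≥ 0 such that f' is monotone and nonzero on [x₀, ∞)). Then there exist C > 0 and N₀ ∈ ℕ such that for all integers N ≥ N₀: | Σ_{n=0}^{N−1} e(f(n)) | ≤ C ( 1/|f'(N)| + |f(N)| ). -/

import Mathlib

open Filter Topology

noncomputable section

/-- `e x = exp(2 π i x)`. -/
def e' (x : ℝ) : ℂ := Complex.exp (2 * (Real.pi : ℂ) * Complex.I * (x : ℂ))

/-!
Split off the first `A = ⌈x₀⌉` terms. On `[A, N]` compare the sum with `∫ e(f)`: on each unit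
interval the error is at most the variation of `e ∘ f`, i.e. `2π ∫ |f'|`, and since `f'` has
constant sign this adds up to `2π |f(N) - f(A)|`. The integral is handled by the first-derivative
test: `1/f'` is monotone and `∫ e(f) = (2πi)⁻¹ ∫ (1/f') (e ∘ f)'`, which a second-mean-value bound
controls by `|1/f'(A)| + |1/f'(N)|`; that bound is proved by integrating by parts against the
moving averages of `1/f'`, which are `C¹` and monotone, and passing to the limit by dominated
convergence. Finally `1/|f'(N)| + |f(N)| ≥ 1` for large `N` (if `|f'| ≥ 1` eventually then `f`
grows linearly), which absorbs all constants.
-/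

open Set intervalIntegral Real

lemma norm_e' (x : ℝ) : ‖e' x‖ = 1 := by
  simp [e', Complex.norm_exp]

lemma HasDerivAt.e' {f : ℝ → ℝ} {f' t : ℝ} (h : HasDerivAt f f' t) :
    HasDerivAt (fun s => e' (f s)) (2 * π * Complex.I * f' * e' (f t)) t := by
  convert (h.ofReal_comp.const_mul (2 * (π : ℂ) * Complex.I)).cexp using 1
  · rfl
  · simp only [_root_.e']
    ring

lemma IsPreconnected.pos_or_neg {s : Set ℝ} {g : ℝ → ℝ} (hs : IsPreconnected s)
    (hg : ContinuousOn g s) (hne : ∀ x ∈ s, g x ≠ 0) :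
    (∀ x ∈ s, 0 < g x) ∨ ∀ x ∈ s, g x < 0 := by
  by_contra! h
  obtain ⟨⟨x, hx, hgx⟩, ⟨y, hy, hgy⟩⟩ := h
  obtain ⟨z, hz, hgz⟩ := hs.intermediate_value hx hy hg ⟨hgx, hgy⟩
  exact hne z hz hgz

section ConstantSign

variable {s : Set ℝ} {g : ℝ → ℝ}

lemma IsPreconnected.monotoneOn_or_antitoneOn_inv (hs : IsPreconnected s)
    (hg : ContinuousOn g s) (hne : ∀ x ∈ s, g x ≠ 0)
    (hmono : MonotoneOn g s ∨ AntitoneOn g s) :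
    MonotoneOn g⁻¹ s ∨ AntitoneOn g⁻¹ s := by
  rcases hs.pos_or_neg hg hne with hpos | hneg <;> rcases hmono with hm | hm
  · exact .inr fun x hx y hy hxy => inv_anti₀ (hpos x hx) (hm hx hy hxy)
  · exact .inl fun x hx y hy hxy => inv_anti₀ (hpos y hy) (hm hx hy hxy)
  · exact .inr fun x hx y hy hxy => (inv_le_inv_of_neg (hneg y hy) (hneg x hx)).2 (hm hx hy hxy)
  · exact .inl fun x hx y hy hxy => (inv_le_inv_of_neg (hneg x hx) (hneg y hy)).2 (hm hx hy hxy)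

lemma IsPreconnected.monotoneOn_or_antitoneOn_abs (hs : IsPreconnected s)
    (hg : ContinuousOn g s) (hne : ∀ x ∈ s, g x ≠ 0)
    (hmono : MonotoneOn g s ∨ AntitoneOn g s) :
    MonotoneOn (|g ·|) s ∨ AntitoneOn (|g ·|) s := by
  rcases hs.pos_or_neg hg hne with hpos | hneg
  · have h : EqOn g (|g ·|) s := fun x hx => (abs_of_pos (hpos x hx)).symm
    exact hmono.imp (·.congr h) (·.congr h)
  · have h : EqOn (-g) (|g ·|) s := fun x hx => (abs_of_neg (hneg x hx)).symm
    exact (hmono.imp MonotoneOn.neg AntitoneOn.neg).symm.imp (·.congr h) (·.congr h)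

end ConstantSign

lemma eventually_le_or_eventually_ge_of_monotoneOn_or_antitoneOn {m : ℝ → ℝ} {c : ℝ}
    (hm : MonotoneOn m (Ici c) ∨ AntitoneOn m (Ici c)) (r : ℝ) :
    (∀ᶠ x in atTop, m x ≤ r) ∨ ∀ᶠ x in atTop, r ≤ m x := by
  rcases hm with hm | hm
  · by_cases h : ∃ x ≥ c, r ≤ m x
    · obtain ⟨x, hx, hrx⟩ := h
      exact .inr <| eventually_atTop.2 ⟨x, fun y hy => hrx.trans (hm hx (hx.trans hy) hy)⟩
    · push Not at h
      exact .inl <| eventually_atTop.2 ⟨c, fun y hy => (h y hy).le⟩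
  · by_cases h : ∃ x ≥ c, m x ≤ r
    · obtain ⟨x, hx, hxr⟩ := h
      exact .inl <| eventually_atTop.2 ⟨x, fun y hy => (hm hx (hx.trans hy) hy).trans hxr⟩
    · push Not at h
      exact .inr <| eventually_atTop.2 ⟨c, fun y hy => (h y hy).le⟩

lemma tendsto_abs_atTop_of_one_le_abs_deriv {f : ℝ → ℝ} (hf : Differentiable ℝ f)
    (h : ∀ᶠ x in atTop, 1 ≤ |deriv f x|) : Tendsto (|f ·|) atTop atTop := by
  obtain ⟨x₁, hx₁⟩ := eventually_atTop.1 h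
  have key : ∀ x > x₁, x + (-x₁ - |f x₁|) ≤ |f x| := by
    intro x hx
    obtain ⟨c, hc, hslope⟩ := exists_deriv_eq_slope f hx hf.continuous.continuousOn
      hf.differentiableOn
    have hgrowth : x - x₁ ≤ |f x - f x₁| := by
      rw [eq_div_iff (sub_ne_zero.2 hx.ne')] at hslope
      rw [← hslope, abs_mul, abs_of_pos (sub_pos.2 hx)]
      exact le_mul_of_one_le_left (sub_pos.2 hx).le (hx₁ c hc.1.le)
    linarith [abs_sub (f x) (f x₁)]
  exact tendsto_atTop_mono' atTop ((eventually_gt_atTop x₁).mono key)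
    (tendsto_atTop_add_const_right _ _ tendsto_id)

lemma eventually_one_le_inv_abs_deriv_add_abs {f : ℝ → ℝ} (hf : ContDiff ℝ 1 f) {c : ℝ}
    (hmono : MonotoneOn (deriv f) (Ici c) ∨ AntitoneOn (deriv f) (Ici c))
    (hne : ∀ x ≥ c, deriv f x ≠ 0) :
    ∀ᶠ x in atTop, 1 ≤ |deriv f x|⁻¹ + |f x| := by
  have habs := isPreconnected_Ici.monotoneOn_or_antitoneOn_abs
    (hf.continuous_deriv le_rfl).continuousOn hne hmono
  rcases eventually_le_or_eventually_ge_of_monotoneOn_or_antitoneOn habs 1 with hsmall | hlarge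
  · filter_upwards [hsmall, eventually_ge_atTop c] with x hx hcx
    have := one_le_inv₀ (abs_pos.2 (hne x hcx)) |>.2 hx
    linarith [abs_nonneg (f x)]
  · filter_upwards [(tendsto_abs_atTop_of_one_le_abs_deriv (hf.differentiable one_ne_zero)
      hlarge).eventually_ge_atTop 1] with x hx
    linarith [inv_nonneg.2 (abs_nonneg (deriv f x))]

section MovingAverage

variable {W : ℝ → ℝ} {h : ℝ}

def movingAverage (W : ℝ → ℝ) (h t : ℝ) : ℝ := h⁻¹ * ∫ s in t..t + h, W s

lemma movingAverage_eq_slope (hW : Continuous W) (t : ℝ) :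
    movingAverage W h t = h⁻¹ * ((∫ s in 0..t + h, W s) - ∫ s in 0..t, W s) := by
  rw [movingAverage, integral_interval_sub_left (hW.intervalIntegrable _ _)
    (hW.intervalIntegrable _ _)]

lemma hasDerivAt_movingAverage (hW : Continuous W) (t : ℝ) :
    HasDerivAt (movingAverage W h) (h⁻¹ * (W (t + h) - W t)) t := by
  have hprim : ∀ x, HasDerivAt (fun x => ∫ s in 0..x, W s) (W x) x :=
    fun x => (hW.integral_hasStrictDerivAt 0 x).hasDerivAt
  rw [funext (movingAverage_eq_slope (h := h) hW)]
  exact (((hprim (t + h)).comp_add_const t h).sub (hprim t)).const_mul h⁻¹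

lemma tendsto_movingAverage (hW : Continuous W) (t : ℝ) :
    Tendsto (fun h => movingAverage W h t) (𝓝[>] 0) (𝓝 (W t)) := by
  simp_rw [movingAverage_eq_slope hW]
  exact ((hW.integral_hasStrictDerivAt 0 t).hasDerivAt).tendsto_slope_zero_right

lemma le_movingAverage (hW : Monotone W) (hh : 0 < h) (t : ℝ) :
    W t ≤ movingAverage W h t := by
  rw [movingAverage, le_inv_mul_iff₀ hh]
  calc h * W t = ∫ _ in t..t + h, W t := by simp
    _ ≤ ∫ s in t..t + h, W s := integral_mono_on (by linarith) intervalIntegrable_const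
          (hW.intervalIntegrable) fun s hs => hW hs.1

lemma movingAverage_le (hW : Monotone W) (hh : 0 < h) (t : ℝ) :
    movingAverage W h t ≤ W (t + h) := by
  rw [movingAverage, inv_mul_le_iff₀ hh]
  calc ∫ s in t..t + h, W s ≤ ∫ _ in t..t + h, W (t + h) :=
        integral_mono_on (by linarith) (hW.intervalIntegrable) intervalIntegrable_const
          fun s hs => hW hs.2
    _ = h * W (t + h) := by simp

end MovingAverage

section VectorValued

variable {E : Type*} [NormedAddCommGroup E] [NormedSpace ℝ E] [CompleteSpace E]
  {F F' : ℝ → E} {a b : ℝ}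

lemma norm_integral_smul_deriv_le_of_deriv_nonneg {u u' : ℝ → ℝ}
    (hu : ∀ t, HasDerivAt u (u' t) t) (hu' : Continuous u') (hu'_nonneg : ∀ t, 0 ≤ u' t)
    (hF : ∀ t, HasDerivAt F (F' t) t) (hF' : Continuous F') (hF_le : ∀ t, ‖F t‖ ≤ 1)
    (hab : a ≤ b) :
    ‖∫ t in a..b, u t • F' t‖ ≤ 2 * (|u a| + |u b|) := by
  have hend : ∀ t, ‖u t • F t‖ ≤ |u t| := fun t => by
    rw [norm_smul, Real.norm_eq_abs]
    exact mul_le_of_le_one_right (abs_nonneg _) (hF_le t)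
  have hvar : ‖∫ t in a..b, u' t • F t‖ ≤ u b - u a := calc
    _ ≤ ∫ t in a..b, u' t := norm_integral_le_of_norm_le hab (.of_forall fun t _ => by
          rw [norm_smul, Real.norm_of_nonneg (hu'_nonneg t)]
          exact mul_le_of_le_one_right (hu'_nonneg t) (hF_le t)) (hu'.intervalIntegrable _ _)
    _ = u b - u a := integral_eq_sub_of_hasDerivAt (fun t _ => hu t) (hu'.intervalIntegrable _ _)
  rw [integral_smul_deriv_eq_deriv_smul (fun t _ => hu t) (fun t _ => hF t)
    (hu'.intervalIntegrable _ _) (hF'.intervalIntegrable _ _)]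
  linarith [norm_sub_le (u b • F b - u a • F a) (∫ t in a..b, u' t • F t),
    norm_sub_le (u b • F b) (u a • F a), hend a, hend b, le_abs_self (u b), neg_abs_le (u a)]

lemma norm_integral_smul_deriv_le_of_monotone {W : ℝ → ℝ} (hWc : Continuous W) (hWm : Monotone W)
    (hF : ∀ t, HasDerivAt F (F' t) t) (hF' : Continuous F') (hF_le : ∀ t, ‖F t‖ ≤ 1)
    (hab : a ≤ b) :
    ‖∫ t in a..b, W t • F' t‖ ≤ 2 * (|W a| + |W b|) := by
  have hsmooth : ∀ h > 0, ‖∫ t in a..b, movingAverage W h t • F' t‖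
      ≤ 2 * (|movingAverage W h a| + |movingAverage W h b|) := fun h hh =>
    norm_integral_smul_deriv_le_of_deriv_nonneg (hasDerivAt_movingAverage hWc) (by fun_prop)
      (fun t => mul_nonneg (inv_nonneg.2 hh.le) (sub_nonneg.2 (hWm (by linarith))))
      hF hF' hF_le hab
  have hlim : Tendsto (fun h => ∫ t in a..b, movingAverage W h t • F' t) (𝓝[>] 0)
      (𝓝 (∫ t in a..b, W t • F' t)) := by
    refine tendsto_integral_filter_of_dominated_convergence
      (fun t => max |W a| |W (b + 1)| * ‖F' t‖) (.of_forall fun h => ?_) ?_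
      ((continuous_const.mul hF'.norm).intervalIntegrable _ _)
      (.of_forall fun t _ => (tendsto_movingAverage hWc t).smul_const (F' t))
    · have hcont := fun t => (hasDerivAt_movingAverage (h := h) hWc t).continuousAt
      exact ((continuous_iff_continuousAt.2 hcont).smul hF').aestronglyMeasurable
    · filter_upwards [Ioc_mem_nhdsGT zero_lt_one] with h hh
      refine .of_forall fun t ht => ?_
      rw [uIoc_of_le hab] at ht
      rw [norm_smul, Real.norm_eq_abs]
      gcongr
      exact abs_le_max_abs_abs ((hWm ht.1.le).trans (le_movingAverage hWm hh.1 t))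
        ((movingAverage_le hWm hh.1 t).trans (hWm (by linarith [ht.2, hh.2])))
  exact le_of_tendsto_of_tendsto hlim.norm
    (((tendsto_movingAverage hWc a).abs.add (tendsto_movingAverage hWc b).abs).const_mul 2)
    (eventually_mem_nhdsWithin.mono hsmooth)

lemma norm_integral_smul_deriv_le_of_monotoneOn {W : ℝ → ℝ} (hWc : ContinuousOn W (Icc a b))
    (hWm : MonotoneOn W (Icc a b)) (hF : ∀ t, HasDerivAt F (F' t) t) (hF' : Continuous F')
    (hF_le : ∀ t, ‖F t‖ ≤ 1) (hab : a ≤ b) :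
    ‖∫ t in a..b, W t • F' t‖ ≤ 2 * (|W a| + |W b|) := by
  have hproj : ∀ t, (projIcc a b hab t : ℝ) ∈ Icc a b := fun t => (projIcc a b hab t).2
  have hext : ∀ t ∈ Icc a b, W (projIcc a b hab t) = W t := fun t ht => by
    rw [projIcc_of_mem hab ht]
  have := norm_integral_smul_deriv_le_of_monotone (W := fun t => W (projIcc a b hab t))
    (hWc.comp_continuous (continuous_subtype_val.comp continuous_projIcc) hproj)
    (fun s t hst => hWm (hproj s) (hproj t) (monotone_projIcc hab hst)) hF hF' hF_le hab
  rwa [integral_congr (g := fun t => W t • F' t) fun t ht => by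
      rw [hext t (uIcc_of_le hab ▸ ht)], hext a (left_mem_Icc.2 hab),
    hext b (right_mem_Icc.2 hab)] at this

/-- A form of the second mean value theorem. -/
lemma norm_integral_smul_deriv_le {W : ℝ → ℝ} (hWc : ContinuousOn W (Icc a b))
    (hW : MonotoneOn W (Icc a b) ∨ AntitoneOn W (Icc a b)) (hF : ∀ t, HasDerivAt F (F' t) t)
    (hF' : Continuous F') (hF_le : ∀ t, ‖F t‖ ≤ 1) (hab : a ≤ b) :
    ‖∫ t in a..b, W t • F' t‖ ≤ 2 * (|W a| + |W b|) := by
  rcases hW with hW | hW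
  · exact norm_integral_smul_deriv_le_of_monotoneOn hWc hW hF hF' hF_le hab
  · simpa [neg_smul, integral_neg] using
      norm_integral_smul_deriv_le_of_monotoneOn hWc.neg hW.neg hF hF' hF_le hab

lemma norm_sub_integral_le_integral_norm_deriv (hF : ∀ t, HasDerivAt F (F' t) t)
    (hF' : Continuous F') (x : ℝ) :
    ‖F x - ∫ t in x..x + 1, F t‖ ≤ ∫ t in x..x + 1, ‖F' t‖ := by
  have hFc : Continuous F := continuous_iff_continuousAt.2 fun t => (hF t).continuousAt
  have hdrift : ∀ t ∈ Icc x (x + 1), ‖F x - F t‖ ≤ ∫ s in x..x + 1, ‖F' s‖ := by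
    intro t ht
    rw [norm_sub_rev, ← integral_eq_sub_of_hasDerivAt (fun s _ => hF s)
      (hF'.intervalIntegrable _ _)]
    exact (norm_integral_le_integral_norm ht.1).trans <| integral_mono_interval le_rfl ht.1 ht.2
      (.of_forall fun _ => norm_nonneg _) (hF'.norm.intervalIntegrable _ _)
  calc ‖F x - ∫ t in x..x + 1, F t‖ = ‖∫ t in x..x + 1, (F x - F t)‖ := by
        rw [integral_sub intervalIntegrable_const (hFc.intervalIntegrable _ _), integral_const]
        simp
    _ ≤ (∫ s in x..x + 1, ‖F' s‖) * |x + 1 - x| := norm_integral_le_of_norm_le_const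
        fun t ht => hdrift t <| Ioc_subset_Icc_self <| by
          rwa [uIoc_of_le (le_add_of_nonneg_right zero_le_one)] at ht
    _ = ∫ s in x..x + 1, ‖F' s‖ := by simp

lemma norm_sum_Ico_sub_integral_le (hF : ∀ t, HasDerivAt F (F' t) t) (hF' : Continuous F')
    {m n : ℕ} (hmn : m ≤ n) :
    ‖∑ k ∈ Finset.Ico m n, F k - ∫ t in (m : ℝ)..n, F t‖ ≤ ∫ t in (m : ℝ)..n, ‖F' t‖ := by
  have hFc : Continuous F := continuous_iff_continuousAt.2 fun t => (hF t).continuousAt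
  rw [← sum_integral_adjacent_intervals_Ico hmn fun k _ => hFc.intervalIntegrable _ _,
    ← sum_integral_adjacent_intervals_Ico hmn fun k _ => hF'.norm.intervalIntegrable _ _,
    ← Finset.sum_sub_distrib]
  refine (norm_sum_le _ _).trans (Finset.sum_le_sum fun k _ => ?_)
  simpa using norm_sub_integral_le_integral_norm_deriv hF hF' k

end VectorValued

lemma ContDiff.hasDerivAt_e' {f : ℝ → ℝ} (hf : ContDiff ℝ 1 f) (t : ℝ) :
    HasDerivAt (fun s => e' (f s)) (2 * π * Complex.I * deriv f t * e' (f t)) t :=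
  ((hf.differentiable one_ne_zero t).hasDerivAt).e'

lemma ContDiff.continuous_deriv_e' {f : ℝ → ℝ} (hf : ContDiff ℝ 1 f) :
    Continuous fun t => 2 * π * Complex.I * deriv f t * e' (f t) := by
  have hg := hf.continuous_deriv le_rfl
  have hF : Continuous fun t => e' (f t) :=
    continuous_iff_continuousAt.2 fun t => (hf.hasDerivAt_e' t).continuousAt
  fun_prop

lemma integral_abs_deriv_eq_abs_sub {f : ℝ → ℝ} (hf : ContDiff ℝ 1 f) {a b : ℝ} (hab : a ≤ b)
    (hne : ∀ t ∈ Icc a b, deriv f t ≠ 0) :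
    ∫ t in a..b, |deriv f t| = |f b - f a| := by
  have hg := hf.continuous_deriv le_rfl
  rw [← integral_deriv_eq_sub (fun x _ => hf.differentiable one_ne_zero x)
    (hg.intervalIntegrable _ _)]
  rcases isPreconnected_Icc.pos_or_neg hg.continuousOn hne with hpos | hneg
  · rw [abs_of_nonneg (integral_nonneg hab fun t ht => (hpos t ht).le)]
    exact integral_congr fun t ht => abs_of_pos (hpos t (uIcc_of_le hab ▸ ht))
  · rw [← abs_neg, ← integral_neg,
      abs_of_nonneg (integral_nonneg hab fun t ht => neg_nonneg.2 (hneg t ht).le)]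
    exact integral_congr fun t ht => abs_of_neg (hneg t (uIcc_of_le hab ▸ ht))

lemma norm_integral_e'_le {f : ℝ → ℝ} (hf : ContDiff ℝ 1 f) {a b : ℝ} (hab : a ≤ b)
    (hne : ∀ t ∈ Icc a b, deriv f t ≠ 0)
    (hmono : MonotoneOn (deriv f) (Icc a b) ∨ AntitoneOn (deriv f) (Icc a b)) :
    ‖∫ t in a..b, e' (f t)‖ ≤ (|deriv f a|⁻¹ + |deriv f b|⁻¹) / π := by
  have hg := (hf.continuous_deriv le_rfl).continuousOn (s := Icc a b)
  have hmvt := norm_integral_smul_deriv_le (W := (deriv f)⁻¹) (hg.inv₀ hne)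
    (isPreconnected_Icc.monotoneOn_or_antitoneOn_inv hg hne hmono) hf.hasDerivAt_e'
    hf.continuous_deriv_e' (fun t => (norm_e' _).le) hab
  have hint : ∫ t in a..b, (deriv f)⁻¹ t • (2 * π * Complex.I * deriv f t * e' (f t))
      = 2 * π * Complex.I * ∫ t in a..b, e' (f t) := by
    rw [← integral_const_mul]
    refine integral_congr fun t ht => ?_
    have : ((deriv f t : ℝ) : ℂ) ≠ 0 := Complex.ofReal_ne_zero.2 (hne t (uIcc_of_le hab ▸ ht))
    simp only [Pi.inv_apply, Complex.real_smul, Complex.ofReal_inv]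
    field_simp
  rw [hint, norm_mul, Pi.inv_apply, Pi.inv_apply, abs_inv, abs_inv] at hmvt
  have h2π : ‖2 * (π : ℂ) * Complex.I‖ = 2 * π := by simp [abs_of_pos pi_pos]
  rw [h2π] at hmvt
  rw [le_div_iff₀ pi_pos]
  linarith

lemma norm_sum_Ico_e'_le {f : ℝ → ℝ} (hf : ContDiff ℝ 1 f) {m n : ℕ} (hmn : m ≤ n)
    (hne : ∀ t ∈ Icc (m : ℝ) n, deriv f t ≠ 0)
    (hmono : MonotoneOn (deriv f) (Icc (m : ℝ) n) ∨ AntitoneOn (deriv f) (Icc (m : ℝ) n)) :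
    ‖∑ k ∈ Finset.Ico m n, e' (f k)‖
      ≤ (|deriv f m|⁻¹ + |deriv f n|⁻¹) / π + 2 * π * |f n - f m| := by
  have hmn' : (m : ℝ) ≤ n := Nat.cast_le.2 hmn
  have hcomp := norm_sum_Ico_sub_integral_le hf.hasDerivAt_e' hf.continuous_deriv_e' hmn
  have hvar : ∫ t in (m : ℝ)..n, ‖2 * π * Complex.I * deriv f t * e' (f t)‖
      = 2 * π * |f n - f m| := by
    simp only [norm_mul, norm_e', Complex.norm_real, Complex.norm_I, Complex.norm_ofNat,
      Real.norm_eq_abs, abs_of_pos pi_pos, mul_one]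
    rw [integral_const_mul, integral_abs_deriv_eq_abs_sub hf hmn' hne]
  calc ‖∑ k ∈ Finset.Ico m n, e' (f k)‖
      ≤ ‖∫ t in (m : ℝ)..n, e' (f t)‖
        + ‖∑ k ∈ Finset.Ico m n, e' (f k) - ∫ t in (m : ℝ)..n, e' (f t)‖ :=
      norm_le_norm_add_norm_sub' _ _
    _ ≤ _ := add_le_add (norm_integral_e'_le hf hmn' hne hmono) (hcomp.trans_eq hvar)

theorem stmt18_general (f : ℝ → ℝ) (hf : ContDiff ℝ 1 f) (x₀ : ℝ)
    (hmono : MonotoneOn (deriv f) (Set.Ici x₀) ∨ AntitoneOn (deriv f) (Set.Ici x₀))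
    (hne : ∀ x ≥ x₀, deriv f x ≠ 0) :
    ∃ C > (0:ℝ), ∃ N₀ : ℕ, ∀ N : ℕ, N₀ ≤ N →
      ‖∑ n ∈ Finset.range N, e' (f n)‖ ≤ C * (1 / |deriv f N| + |f N|) := by
  set A := ⌈x₀⌉₊
  have hsub : ∀ N : ℕ, Icc (A : ℝ) N ⊆ Ici x₀ := fun N t ht => (Nat.le_ceil x₀).trans ht.1
  obtain ⟨x₁, hx₁⟩ := eventually_atTop.1 (eventually_one_le_inv_abs_deriv_add_abs hf hmono hne)
  set K := A + |deriv f A|⁻¹ / π + 2 * π * |f A|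
  have hK : 0 ≤ K := by positivity
  refine ⟨K + 2 * π, by positivity, max A ⌈x₁⌉₊, fun N hN => ?_⟩
  have hAN : A ≤ N := le_of_max_le_left hN
  have hlarge : 1 ≤ |deriv f N|⁻¹ + |f N| :=
    hx₁ N ((Nat.le_ceil x₁).trans (Nat.cast_le.2 (le_of_max_le_right hN)))
  have hhead : ‖∑ n ∈ Finset.range A, e' (f n)‖ ≤ A := by
    simpa [norm_e'] using norm_sum_le (Finset.range A) fun n => e' (f n)
  have htail := norm_sum_Ico_e'_le hf hAN (fun t ht => hne t (hsub N ht))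
    (hmono.imp (·.mono (hsub N)) (·.mono (hsub N)))
  have hπ : 1 ≤ π := by linarith [pi_gt_three]
  have hinv : |deriv f N|⁻¹ / π ≤ 2 * π * |deriv f N|⁻¹ :=
    (div_le_self (by positivity) hπ).trans (le_mul_of_one_le_left (by positivity) (by linarith))
  have hdiff : 2 * π * |f N - f A| ≤ 2 * π * (|f N| + |f A|) :=
    mul_le_mul_of_nonneg_left (abs_sub _ _) (by positivity)
  rw [← Finset.sum_range_add_sum_Ico _ hAN, one_div]
  calc ‖∑ n ∈ Finset.range A, e' (f n) + ∑ n ∈ Finset.Ico A N, e' (f n)‖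
      ≤ ‖∑ n ∈ Finset.range A, e' (f n)‖ + ‖∑ n ∈ Finset.Ico A N, e' (f n)‖ := norm_add_le _ _
    _ ≤ K + 2 * π * (|deriv f N|⁻¹ + |f N|) := by
      rw [add_div] at htail
      linarith
    _ ≤ (K + 2 * π) * (|deriv f N|⁻¹ + |f N|) := by
      nlinarith [mul_le_mul_of_nonneg_left hlarge hK]

/-- Quantitative Féjer-type bound: if `f` is `C¹` with `f'` eventually
monotone and eventually nonvanishing, then `|Σ_{n<N} e(f(n))| ≤ C (1/|f'(N)| + |f(N)|)` for
all large `N`. -/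
theorem stmt18 (f : ℝ → ℝ) (hf : ContDiff ℝ 1 f) (x₀ : ℝ) (hx₀ : 0 ≤ x₀)
    (hmono : MonotoneOn (deriv f) (Set.Ici x₀) ∨ AntitoneOn (deriv f) (Set.Ici x₀))
    (hne : ∀ x ≥ x₀, deriv f x ≠ 0) :
    ∃ C > (0:ℝ), ∃ N₀ : ℕ, ∀ N : ℕ, N₀ ≤ N →
      ‖∑ n ∈ Finset.range N, e' (f n)‖ ≤ C * (1 / |deriv f N| + |f N|) :=
  stmt18_general f hf x₀ hmono hne

end
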